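/- arXiv:1007.0895 — 3 statements merged into one kernel-verified Lean document; each statement's English description precedes it below -/
import Mathlib

section
/- Let H be a geodesic δ-hyperbolic space, θ = 4δ, and ε > 2θ. If a geodesic line Γ ⊂ H is (2θ,B)-rigid with respect to a group G of isometries, then Γ is (ε, B + 6ε + 4θ)-rigid. -/
/-- The Gromov product of `y` and `z` with respect to the base point `x`. -/
noncomputable def gromovProd {H : Type*} [MetricSpace H] (x y z : H) : ℝ :=
  (dist y x + dist z x - dist y z) / 2

/-- δ-hyperbolicity in the Gromov product sense. -/
def IsGromovHyperbolic (H : Type*) [MetricSpace H] (δ : ℝ) : Prop :=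
  ∀ w x y z : H, min (gromovProd w x y) (gromovProd w y z) - δ ≤ gromovProd w x z

/-- A geodesic parametrized by arclength from `x` to `y`. -/
def IsGeodesicFrom {H : Type*} [MetricSpace H] (γ : ℝ → H) (x y : H) : Prop :=
  γ 0 = x ∧ γ (dist x y) = y ∧
    ∀ s ∈ Set.Icc (0 : ℝ) (dist x y), ∀ t ∈ Set.Icc (0 : ℝ) (dist x y),
      dist (γ s) (γ t) = |s - t|

/-- A geodesic metric space. -/
def GeodesicSpace (H : Type*) [MetricSpace H] : Prop :=
  ∀ x y : H, ∃ γ : ℝ → H, IsGeodesicFrom γ x y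

/-- A geodesic line: an isometric embedding of ℝ. -/
def IsGeodesicLine {H : Type*} [MetricSpace H] (γ : ℝ → H) : Prop :=
  ∀ s t : ℝ, dist (γ s) (γ t) = |s - t|

/-- A subset `A` is `(ε,B)`-rigid with respect to a group `G` of isometries if
`f(A) = A` for every `f ∈ G` such that the intersection with precision `ε` of `A`
and `f(A)` has diameter at least `B`. -/
def RigidWith {H : Type*} [MetricSpace H] (G : Subgroup (H ≃ᵢ H)) (A : Set H)
    (ε B : ℝ) : Prop :=
  ∀ f : H ≃ᵢ H, f ∈ G →
    B ≤ Metric.diam {x : H | Metric.infDist x A ≤ ε ∧ Metric.infDist x (f '' A) ≤ ε} →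
    f '' A = A

/-!
A geodesic segment `[x, y]` whose endpoints are `ε`-close to a geodesic line `Γ` stays
`4δ`-close to `Γ` away from its ends: for a point `z` of `[x, y]` at distance more than
`ε + 2δ` from both ends, thin-triangle arguments make the Gromov product `(p | q)_z` of points
`p, q ∈ Γ` near `x, y` at most `2δ`, and a point of `Γ` between `p` and `q` is within
`(p | q)_z + 2δ` of `z`. If the `ε`-intersection of `Γ` and `f(Γ)` has diameter at least
`B + 6ε + 4θ`, take two of its points that far apart; the middle of a geodesic segment between
them lies in the `θ`-neighbourhood of both lines and has length at least `B`, so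
`(2θ, B)`-rigidity applies.
-/

open Metric Set

section GromovProduct

variable {H : Type*} [MetricSpace H]

theorem gromovProd_comm (w x y : H) : gromovProd w x y = gromovProd w y x := by
  unfold gromovProd
  rw [dist_comm y x]
  ring

theorem gromovProd_nonneg (w x y : H) : 0 ≤ gromovProd w x y := by
  unfold gromovProd
  linarith [dist_triangle x w y, dist_comm w y]

theorem gromovProd_le_dist (w x y : H) : gromovProd w x y ≤ dist w y := by
  unfold gromovProd
  linarith [dist_triangle x y w, dist_comm y w]

theorem dist_sub_dist_le_gromovProd (w x p : H) : dist x w - dist x p ≤ gromovProd w x p := by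
  unfold gromovProd
  linarith [dist_triangle x p w]

end GromovProduct

theorem Metric.exists_lt_dist_of_lt_diam {α : Type*} [PseudoMetricSpace α] {s : Set α} {C : ℝ}
    (hC : 0 ≤ C) (h : C < diam s) : ∃ x ∈ s, ∃ y ∈ s, C < dist x y := by
  by_contra! h'
  exact h.not_ge (diam_le_of_forall_dist_le hC h')

namespace IsGeodesicLine

variable {H : Type*} [MetricSpace H] {γ : ℝ → H}

theorem isometry_comp {H' : Type*} [MetricSpace H'] {f : H → H'} (hf : Isometry f)
    (hγ : IsGeodesicLine γ) : IsGeodesicLine (f ∘ γ) := fun s t => by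
  rw [Function.comp_apply, Function.comp_apply, hf.dist_eq, hγ]

theorem exists_dist_eq (hγ : IsGeodesicLine γ) (a b : ℝ) {r : ℝ} (hr₀ : 0 ≤ r)
    (hr : r ≤ dist (γ a) (γ b)) :
    ∃ t, dist (γ a) (γ t) = r ∧ dist (γ t) (γ b) = dist (γ a) (γ b) - r := by
  rw [hγ] at hr ⊢
  rcases le_total a b with hab | hab
  · rw [abs_of_nonpos (by linarith)] at hr ⊢
    refine ⟨a + r, ?_, ?_⟩ <;> rw [hγ, abs_of_nonpos (by linarith)] <;> ring
  · rw [abs_of_nonneg (by linarith)] at hr ⊢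
    refine ⟨a - r, ?_, ?_⟩ <;> rw [hγ, abs_of_nonneg (by linarith)] <;> ring

end IsGeodesicLine

namespace IsGeodesicFrom

variable {H : Type*} [MetricSpace H] {c : ℝ → H} {x y : H} {s : ℝ}

theorem dist_left_apply (hc : IsGeodesicFrom c x y) (hs : s ∈ Icc 0 (dist x y)) :
    dist x (c s) = s := by
  rw [← hc.1, hc.2.2 0 (left_mem_Icc.2 dist_nonneg) s hs, abs_of_nonpos (by linarith [hs.1])]
  ring

theorem dist_apply_right (hc : IsGeodesicFrom c x y) (hs : s ∈ Icc 0 (dist x y)) :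
    dist (c s) y = dist x y - s := by
  conv_lhs => rw [← hc.2.1]
  rw [hc.2.2 s hs _ (right_mem_Icc.2 dist_nonneg), abs_of_nonpos (by linarith [hs.2])]
  ring

end IsGeodesicFrom

namespace IsGromovHyperbolic

variable {H : Type*} [MetricSpace H] {δ : ℝ} {γ : ℝ → H}

theorem gromovProd_le_of_lt (hH : IsGromovHyperbolic H δ) {w x y z : H}
    (h : gromovProd w x z + δ < gromovProd w x y) :
    gromovProd w y z ≤ gromovProd w x z + δ := by
  by_contra! h'
  linarith [hH w x y z, lt_min h h']

/-- `w` is the internal point on the side `[p, q]` of the triangle `p q z`, so both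
`(p | w)_z` and `(w | q)_z` equal `(d(z, w) + (p | q)_z) / 2`. -/
theorem dist_le_gromovProd_add (hH : IsGromovHyperbolic H δ) {p q w z : H}
    (hw : dist p w + dist w q = dist p q) (hpw : dist p w = gromovProd p z q) :
    dist z w ≤ gromovProd z p q + 2 * δ := by
  have h₁ : gromovProd z p w = (dist z w + gromovProd z p q) / 2 := by
    unfold gromovProd at *
    linarith [dist_comm z p, dist_comm z q, dist_comm q p, dist_comm z w]
  have h₂ : gromovProd z w q = (dist z w + gromovProd z p q) / 2 := by
    unfold gromovProd at *
    linarith [dist_comm z p, dist_comm z q, dist_comm q p, dist_comm z w]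
  have := hH z p w q
  rw [h₁, h₂, min_self] at this
  linarith

theorem gromovProd_le_of_dist_eq_add (hH : IsGromovHyperbolic H δ) (hδ : 0 ≤ δ)
    {x y z p q : H} (hz : dist x z + dist z y = dist x y)
    (hp : dist x p + 2 * δ < dist x z) (hq : dist y q + 2 * δ < dist z y) :
    gromovProd z p q ≤ 2 * δ := by
  have hxy : gromovProd z x y = 0 := by
    unfold gromovProd
    linarith [dist_comm x z, dist_comm y z]
  have hxp := dist_sub_dist_le_gromovProd z x p
  have hyq := dist_sub_dist_le_gromovProd z y q
  rw [dist_comm y z] at hyq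
  have hpy : gromovProd z p y ≤ δ := by
    linarith [hH.gromovProd_le_of_lt (show gromovProd z x y + δ < gromovProd z x p by linarith)]
  rw [gromovProd_comm] at hpy ⊢
  linarith [hH.gromovProd_le_of_lt (show gromovProd z y p + δ < gromovProd z y q by linarith)]

theorem exists_dist_le_gromovProd_add (hH : IsGromovHyperbolic H δ) (hγ : IsGeodesicLine γ)
    (z : H) (a b : ℝ) : ∃ t, dist z (γ t) ≤ gromovProd z (γ a) (γ b) + 2 * δ := by
  obtain ⟨t, hat, htb⟩ := hγ.exists_dist_eq a b (gromovProd_nonneg (γ a) z (γ b))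
    (gromovProd_le_dist (γ a) z (γ b))
  exact ⟨t, hH.dist_le_gromovProd_add (by rw [hat, htb]; ring) hat⟩

theorem infDist_range_le_of_dist_eq_add (hH : IsGromovHyperbolic H δ) (hδ : 0 ≤ δ)
    (hγ : IsGeodesicLine γ) {x y z : H} (hz : dist x z + dist z y = dist x y)
    (hx : infDist x (range γ) + 2 * δ < dist x z) (hy : infDist y (range γ) + 2 * δ < dist z y) :
    infDist z (range γ) ≤ 4 * δ := by
  obtain ⟨_, ⟨a, rfl⟩, hxa⟩ := (infDist_lt_iff (range_nonempty γ)).1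
    (show infDist x (range γ) < dist x z - 2 * δ by linarith)
  obtain ⟨_, ⟨b, rfl⟩, hyb⟩ := (infDist_lt_iff (range_nonempty γ)).1
    (show infDist y (range γ) < dist z y - 2 * δ by linarith)
  obtain ⟨t, ht⟩ := hH.exists_dist_le_gromovProd_add hγ z a b
  have hab := hH.gromovProd_le_of_dist_eq_add hδ hz (p := γ a) (q := γ b) (by linarith)
    (by linarith)
  calc infDist z (range γ) ≤ dist z (γ t) := infDist_le_dist_of_mem (mem_range_self t)
    _ ≤ 4 * δ := by linarith

end IsGromovHyperbolic

theorem IsGeodesicFrom.infDist_range_le {H : Type*} [MetricSpace H] {δ : ℝ}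
    (hH : IsGromovHyperbolic H δ) (hδ : 0 ≤ δ) {γ c : ℝ → H} (hγ : IsGeodesicLine γ) {x y : H}
    (hc : IsGeodesicFrom c x y) {s : ℝ} (hx : infDist x (range γ) + 2 * δ < s)
    (hy : infDist y (range γ) + 2 * δ < dist x y - s) :
    infDist (c s) (range γ) ≤ 4 * δ := by
  have hs : s ∈ Icc 0 (dist x y) :=
    ⟨by linarith [infDist_nonneg (x := x) (s := range γ)],
      by linarith [infDist_nonneg (x := y) (s := range γ)]⟩
  have hxs := hc.dist_left_apply hs
  have hsy := hc.dist_apply_right hs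
  have hseg : dist x (c s) + dist (c s) y = dist x y := by rw [hxs, hsy]; ring
  exact hH.infDist_range_le_of_dist_eq_add hδ hγ hseg (by linarith) (by linarith)

/-- If a geodesic line `Γ` in a geodesic δ-hyperbolic space is `(2θ,B)`-rigid
(`θ = 4δ`), then for every `ε > 2θ` it is `(ε, B + 6ε + 4θ)`-rigid. -/
theorem rigid_upgrade {H : Type*} [MetricSpace H] {δ : ℝ} (hδ : 0 ≤ δ)
    (hH : IsGromovHyperbolic H δ) (hgeo : GeodesicSpace H)
    (G : Subgroup (H ≃ᵢ H)) (γ : ℝ → H) (hγ : IsGeodesicLine γ)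
    (θ : ℝ) (hθ : θ = 4 * δ) (ε B : ℝ) (hε : 2 * θ < ε)
    (hrigid : RigidWith G (Set.range γ) (2 * θ) B) :
    RigidWith G (Set.range γ) ε (B + 6 * ε + 4 * θ) := by
  intro f hf hdiam
  rcases le_or_gt B 0 with hB | hB
  · exact hrigid f hf (hB.trans diam_nonneg)
  subst hθ
  have hbdd :
      Bornology.IsBounded {x | infDist x (range γ) ≤ ε ∧ infDist x (f '' range γ) ≤ ε} := by
    by_contra h
    rw [diam_eq_zero_of_unbounded h] at hdiam
    linarith
  obtain ⟨x, ⟨hxγ, hxfγ⟩, y, ⟨hyγ, hyfγ⟩, hxy⟩ :=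
    exists_lt_dist_of_lt_diam (C := B + 4 * ε + 4 * δ) (by linarith) (by linarith)
  obtain ⟨c, hc⟩ := hgeo x y
  have hfγ : IsGeodesicLine (f ∘ γ) := hγ.isometry_comp f.isometry
  rw [← range_comp] at hxfγ hyfγ
  set T := 2 * ε + 2 * δ
  have hnear : ∀ s, T ≤ s → s ≤ dist x y - T →
      infDist (c s) (range γ) ≤ 2 * (4 * δ) ∧ infDist (c s) (f '' range γ) ≤ 2 * (4 * δ) := by
    intro s hs₁ hs₂
    rw [← range_comp]
    exact ⟨by linarith [hc.infDist_range_le hH hδ hγ (s := s) (by linarith) (by linarith)],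
      by linarith [hc.infDist_range_le hH hδ hfγ (s := s) (by linarith) (by linarith)]⟩
  refine hrigid f hf ?_
  calc B ≤ dist (c T) (c (dist x y - T)) := by
        rw [hc.2.2 T ⟨by linarith, by linarith⟩ _ ⟨by linarith, by linarith⟩,
          abs_of_nonpos (by linarith)]
        linarith
    _ ≤ diam _ := dist_le_diam_of_mem
        (hbdd.subset fun z hz => ⟨hz.1.trans (by linarith), hz.2.trans (by linarith)⟩)
        (hnear T le_rfl (by linarith)) (hnear _ (by linarith) le_rfl)
end

section
/- Let f be an isometry of a metric space with an invariant geodesic line Γ on which f acts as a translation of length L(f) = inf_x d(x,f(x)). If Γ' is another f-invariant geodesic line in a geodesic δ-hyperbolic space (θ = 4δ), then each of Γ, Γ' lies in the 2θ-tubular neighborhood of the other. -/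
/-- An `f`-invariant geodesic line is translated by `f` by some nonzero amount
(a reflection or a fixed point would contradict `0 < L = inf d(x, f x)`). -/
lemma line_translation {H : Type*} [MetricSpace H]
    (f : H → H) (hf : Isometry f) (γ : ℝ → H) (hγ : IsGeodesicLine γ)
    (hinv : f '' Set.range γ = Set.range γ)
    (L : ℝ) (hL : L = ⨅ x : H, dist x (f x)) (hLpos : 0 < L) :
    ∃ a : ℝ, a ≠ 0 ∧ ∀ t, f (γ t) = γ (t + a) := by
  have hmem : ∀ t : ℝ, ∃ u : ℝ, γ u = f (γ t) := by
    intro t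
    have h1 : f (γ t) ∈ f '' Set.range γ := ⟨γ t, ⟨t, rfl⟩, rfl⟩
    rw [hinv] at h1
    exact h1
  choose g hg using hmem
  have hbdd : BddBelow (Set.range fun x : H => dist x (f x)) :=
    ⟨0, by rintro y ⟨x, rfl⟩; exact dist_nonneg⟩
  have hfix : ∀ t, g t ≠ t := by
    intro t h
    have h0 : f (γ t) = γ t := by rw [← hg t, h]
    have h1 : L ≤ dist (γ t) (f (γ t)) := by
      rw [hL]; exact ciInf_le hbdd (γ t)
    rw [h0, dist_self] at h1
    linarith
  have hiso : ∀ s t, |g s - g t| = |s - t| := by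
    intro s t
    have h1 : dist (γ (g s)) (γ (g t)) = dist (γ s) (γ t) := by
      rw [hg s, hg t, hf.dist_eq]
    rw [hγ, hγ] at h1
    exact h1
  set a := g 0 with ha0
  have habs : ∀ t, g t = a + t ∨ g t = a - t := by
    intro t
    have h1 := hiso t 0
    rw [sub_zero] at h1
    rcases abs_eq_abs.mp h1 with h | h
    · left; linarith
    · right; linarith
  rcases habs 1 with h1 | h1
  · have hgt : ∀ t, g t = t + a := by
      intro t
      rcases habs t with h | h
      · linarith
      · have h2 := hiso t 1
        rw [h, h1] at h2
        rcases abs_eq_abs.mp h2 with h4 | h4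
        · have ht : t = 0 := by linarith
          rw [ht] at h ⊢; linarith
        · linarith
    refine ⟨a, ?_, ?_⟩
    · intro h
      exact hfix 0 (by rw [hgt 0, h, zero_add])
    · intro t
      rw [← hg t, hgt t]
  · have hgt : ∀ t, g t = a - t := by
      intro t
      rcases habs t with h | h
      · have h2 := hiso t 1
        rw [h, h1] at h2
        rcases abs_eq_abs.mp h2 with h4 | h4
        · linarith
        · have ht : t = 0 := by linarith
          rw [ht] at h ⊢; linarith
      · exact h
    exact absurd (by rw [hgt (a/2)]; ring) (hfix (a/2))

/-- Core geometric estimate: a point on one invariant line is within `4δ ≤ 8δ`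
of the other invariant line. -/
lemma axes_core {H : Type*} [MetricSpace H] {δ : ℝ} (hδ : 0 ≤ δ)
    (hH : IsGromovHyperbolic H δ)
    (f : H → H) (hf : Isometry f) (γ γ' : ℝ → H)
    (hγ : IsGeodesicLine γ) (hγ' : IsGeodesicLine γ')
    (a b : ℝ) (ha : a ≠ 0) (hb : b ≠ 0)
    (hfa : ∀ t, f (γ' t) = γ' (t + a)) (hfb : ∀ t, f (γ t) = γ (t + b))
    (p : H) (hp : p ∈ Set.range γ') :
    Metric.infDist p (Set.range γ) ≤ 2 * (4 * δ) := by
  obtain ⟨s, rfl⟩ := hp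
  have hshift : ∀ t u : ℝ, dist (γ' (t + a)) (γ (u + b)) = dist (γ' t) (γ u) := by
    intro t u; rw [← hfa, ← hfb, hf.dist_eq]
  have hshiftn : ∀ (n : ℕ) (t u : ℝ),
      dist (γ' (t + n * a)) (γ (u + n * b)) = dist (γ' t) (γ u) := by
    intro n
    induction n with
    | zero => intro t u; norm_num
    | succ k ih =>
        intro t u
        push_cast
        rw [show (t + ((k : ℝ) + 1) * a) = (t + k * a) + a by ring,
          show (u + ((k : ℝ) + 1) * b) = (u + k * b) + b by ring, hshift, ih]
  set D := dist (γ' s) (γ 0) with hD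
  have hD0 : 0 ≤ D := dist_nonneg
  have haa : 0 < |a| := abs_pos.mpr ha
  have hba : 0 < |b| := abs_pos.mpr hb
  obtain ⟨n, hn⟩ := exists_nat_gt (max ((D + 2 * δ) / |a|) 1)
  have hn1 : (1 : ℝ) < n := lt_of_le_of_lt (le_max_right _ _) hn
  have hnA : D + 2 * δ < n * |a| := by
    have h1 : (D + 2 * δ) / |a| < n := lt_of_le_of_lt (le_max_left _ _) hn
    calc D + 2 * δ = ((D + 2 * δ) / |a|) * |a| := by field_simp
    _ < n * |a| := mul_lt_mul_of_pos_right h1 haa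
  -- distances along γ'
  have dpPn : dist (γ' s) (γ' (s + n * a)) = n * |a| := by
    rw [hγ', show s - (s + (n : ℝ) * a) = -((n : ℝ) * a) by ring, abs_neg, abs_mul,
      Nat.abs_cast]
  have dpPm : dist (γ' s) (γ' (s - n * a)) = n * |a| := by
    rw [hγ', show s - (s - (n : ℝ) * a) = (n : ℝ) * a by ring, abs_mul, Nat.abs_cast]
  have dPmPn : dist (γ' (s - n * a)) (γ' (s + n * a)) = 2 * ((n : ℝ) * |a|) := by
    rw [hγ', show (s - (n : ℝ) * a) - (s + (n : ℝ) * a) = -(2 * ((n : ℝ) * a)) by ring,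
      abs_neg, abs_mul, abs_mul, Nat.abs_cast, abs_two]
  -- f-equivariance gives equal distances between corresponding points
  have dPnQn : dist (γ' (s + n * a)) (γ (n * b)) = D := by
    have h1 := hshiftn n s 0
    rw [zero_add] at h1
    rw [h1]
  have dPmQm : dist (γ' (s - n * a)) (γ (-(n * b))) = D := by
    have h1 := hshiftn n (s - n * a) (-(n * b))
    rw [show s - (n : ℝ) * a + (n : ℝ) * a = s by ring,
      show -((n : ℝ) * b) + (n : ℝ) * b = 0 by ring] at h1
    exact h1.symm
  -- lower bounds on distances from the base point to the far points of γ
  have hQn_lb : (n : ℝ) * |a| - D ≤ dist (γ' s) (γ (n * b)) := by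
    have tri := dist_triangle (γ' s) (γ (n * b)) (γ' (s + n * a))
    have c1 : dist (γ (n * b)) (γ' (s + n * a)) = D := by rw [dist_comm]; exact dPnQn
    rw [dpPn, c1] at tri
    linarith
  have hQm_lb : (n : ℝ) * |a| - D ≤ dist (γ' s) (γ (-(n * b))) := by
    have tri := dist_triangle (γ' s) (γ (-(n * b))) (γ' (s - n * a))
    have c1 : dist (γ (-(n * b))) (γ' (s - n * a)) = D := by rw [dist_comm]; exact dPmQm
    rw [dpPm, c1] at tri
    linarith
  -- commuted versions
  have cPm : dist (γ' (s - n * a)) (γ' s) = (n : ℝ) * |a| := by rw [dist_comm]; exact dpPm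
  have cPn : dist (γ' (s + n * a)) (γ' s) = (n : ℝ) * |a| := by rw [dist_comm]; exact dpPn
  have cQm : dist (γ (-(n * b))) (γ' s) = dist (γ' s) (γ (-(n * b))) := dist_comm _ _
  have cQn : dist (γ (n * b)) (γ' s) = dist (γ' s) (γ (n * b)) := dist_comm _ _
  -- Step 2: the Gromov product (Qm, Pn) based at the base point is ≤ δ
  have gPmPn : gromovProd (γ' s) (γ' (s - n * a)) (γ' (s + n * a)) = 0 := by
    unfold gromovProd; rw [cPm, cPn, dPmPn]; ring
  have h2 := hH (γ' s) (γ' (s - n * a)) (γ (-(n * b))) (γ' (s + n * a))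
  rw [gPmPn] at h2
  have gPmQm_lb : (n : ℝ) * |a| - D ≤ gromovProd (γ' s) (γ' (s - n * a)) (γ (-(n * b))) := by
    unfold gromovProd
    rw [cPm, cQm, dPmQm]
    linarith
  have step2 : gromovProd (γ' s) (γ (-(n * b))) (γ' (s + n * a)) ≤ δ := by
    by_contra hB
    push_neg at hB
    have hA : δ < gromovProd (γ' s) (γ' (s - n * a)) (γ (-(n * b))) := by linarith
    have hmin := lt_min hA hB
    linarith
  -- Step 3: the Gromov product (Qm, Qn) based at the base point is ≤ 2δ
  have h3 := hH (γ' s) (γ (-(n * b))) (γ (n * b)) (γ' (s + n * a))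
  have gQnPn_lb : (n : ℝ) * |a| - D ≤ gromovProd (γ' s) (γ (n * b)) (γ' (s + n * a)) := by
    unfold gromovProd
    have c1 : dist (γ (n * b)) (γ' (s + n * a)) = D := by rw [dist_comm]; exact dPnQn
    rw [cQn, cPn, c1]
    linarith
  have step3 : gromovProd (γ' s) (γ (-(n * b))) (γ (n * b)) ≤ 2 * δ := by
    by_contra hB
    push_neg at hB
    have hA : 2 * δ < gromovProd (γ' s) (γ (n * b)) (γ' (s + n * a)) := by linarith
    have hmin := lt_min hB hA
    linarith
  -- Step 4: project the base point onto the segment of γ between Qm and Qn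
  set M := 2 * ((n : ℝ) * |b|) with hMdef
  have hM0 : 0 < M := by
    have hn0 : (0 : ℝ) < (n : ℝ) := by linarith
    have := mul_pos hn0 hba
    rw [hMdef]; linarith
  have dQmQn : dist (γ (-(n * b))) (γ (n * b)) = M := by
    rw [hγ, show -((n : ℝ) * b) - (n : ℝ) * b = -(2 * ((n : ℝ) * b)) by ring, abs_neg,
      abs_mul, abs_mul, Nat.abs_cast, abs_two]
  have cQnQm : dist (γ (n * b)) (γ (-(n * b))) = M := by rw [dist_comm]; exact dQmQn
  set T := gromovProd (γ (-(n * b))) (γ (n * b)) (γ' s) with hTdef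
  have hTeq : 2 * T = M + dist (γ' s) (γ (-(n * b))) - dist (γ' s) (γ (n * b)) := by
    rw [hTdef]; unfold gromovProd
    rw [cQnQm, cQn]
    ring
  have hT0 : 0 ≤ T := by
    have tri := dist_triangle (γ' s) (γ (-(n * b))) (γ (n * b))
    rw [dQmQn] at tri
    linarith
  have hTM : T ≤ M := by
    have tri := dist_triangle (γ' s) (γ (n * b)) (γ (-(n * b)))
    rw [cQnQm] at tri
    linarith
  have habs2 : |2 * ((n : ℝ) * b)| = M := by
    rw [abs_mul, abs_mul, Nat.abs_cast, abs_two]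
  have hr0 : 0 ≤ T / M := div_nonneg hT0 hM0.le
  have hr1 : T / M ≤ 1 := (div_le_one hM0).mpr hTM
  set m := γ (-(n * b) + 2 * ((n : ℝ) * b) * (T / M)) with hmdef
  have dQmm : dist (γ (-(n * b))) m = T := by
    rw [hmdef, hγ,
      show -((n : ℝ) * b) - (-((n : ℝ) * b) + 2 * ((n : ℝ) * b) * (T / M))
        = -(2 * ((n : ℝ) * b) * (T / M)) by ring,
      abs_neg, abs_mul, habs2, abs_of_nonneg hr0]
    field_simp
  have dmQn : dist m (γ (n * b)) = M - T := by
    rw [hmdef, hγ,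
      show (-((n : ℝ) * b) + 2 * ((n : ℝ) * b) * (T / M)) - (n : ℝ) * b
        = -(2 * ((n : ℝ) * b) * (1 - T / M)) by ring,
      abs_neg, abs_mul, habs2, abs_of_nonneg (by linarith : (0 : ℝ) ≤ 1 - T / M)]
    field_simp
  -- the thin-triangle estimate at m
  have g0 : gromovProd m (γ (-(n * b))) (γ (n * b)) = 0 := by
    unfold gromovProd
    rw [dQmm, dist_comm (γ (n * b)) m, dmQn, dQmQn]
    ring
  have h4 := hH m (γ (-(n * b))) (γ' s) (γ (n * b))
  rw [g0] at h4
  have hmin : min (gromovProd m (γ (-(n * b))) (γ' s)) (gromovProd m (γ' s) (γ (n * b))) ≤ δ := by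
    linarith
  have hGeq : 2 * gromovProd (γ' s) (γ (-(n * b))) (γ (n * b))
      = dist (γ' s) (γ (-(n * b))) + dist (γ' s) (γ (n * b)) - M := by
    unfold gromovProd
    rw [cQm, cQn, dQmQn]
    ring
  have hdist : dist (γ' s) m ≤ 2 * δ + gromovProd (γ' s) (γ (-(n * b))) (γ (n * b)) := by
    rcases min_le_iff.mp hmin with hX | hY
    · have hXeq : 2 * gromovProd m (γ (-(n * b))) (γ' s)
          = T + dist (γ' s) m - dist (γ' s) (γ (-(n * b))) := by
        unfold gromovProd
        rw [dQmm, dist_comm (γ (-(n * b))) (γ' s)]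
        ring
      linarith
    · have hYeq : 2 * gromovProd m (γ' s) (γ (n * b))
          = dist (γ' s) m + (M - T) - dist (γ' s) (γ (n * b)) := by
        unfold gromovProd
        rw [dist_comm (γ (n * b)) m, dmQn]
        ring
      linarith
  have hmem : m ∈ Set.range γ := ⟨_, rfl⟩
  have hinf := Metric.infDist_le_dist_of_mem (x := γ' s) hmem
  linarith

/-- If a hyperbolic isometry `f` of a geodesic δ-hyperbolic space (`θ = 4δ`) has an
invariant geodesic line `Γ` on which it translates by its translation length
`L(f) = inf_x d(x, f x)`, and `Γ'` is another `f`-invariant geodesic line, then each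
of `Γ`, `Γ'` lies in the `2θ`-tubular neighborhood of the other. -/
theorem invariant_axes_close {H : Type*} [MetricSpace H] {δ : ℝ} (hδ : 0 ≤ δ)
    (hH : IsGromovHyperbolic H δ) (hgeo : GeodesicSpace H)
    (f : H → H) (hf : Isometry f)
    (γ γ' : ℝ → H) (hγ : IsGeodesicLine γ) (hγ' : IsGeodesicLine γ')
    (hinv : f '' Set.range γ = Set.range γ) (hinv' : f '' Set.range γ' = Set.range γ')
    (L : ℝ) (hL : L = ⨅ x : H, dist x (f x)) (hLpos : 0 < L)
    (htrans : ∀ p ∈ Set.range γ, dist p (f p) = L) :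
    (∀ p ∈ Set.range γ, Metric.infDist p (Set.range γ') ≤ 2 * (4 * δ)) ∧
    (∀ p ∈ Set.range γ', Metric.infDist p (Set.range γ) ≤ 2 * (4 * δ)) := by

  obtain ⟨b, hb, hfb⟩ := line_translation f hf γ hγ hinv L hL hLpos
  obtain ⟨a, ha, hfa⟩ := line_translation f hf γ' hγ' hinv' L hL hLpos
  constructor
  · intro p hp
    exact axes_core hδ hH f hf γ' γ hγ' hγ b a hb ha hfb hfa p hp
  · intro p hp
    exact axes_core hδ hH f hf γ γ' hγ hγ' a b ha hb hfa hfb p hp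
end

section
/- Let Q(u,v) = au² + buv + cv² be a non-degenerate indefinite integral binary quadratic form that does not represent 0. Then there exists an isometry φ in the integral orthogonal group O_Q(ℤ) whose eigenvalues are λ and λ^{-1} with λ > 1. -/
/-- Pell–Fermat: a non-degenerate, indefinite, integral binary quadratic form
`Q(u,v) = au² + buv + cv²` which does not represent `0` admits an integral isometry
with eigenvalues `λ > 1 > λ⁻¹ > 0` (equivalently, an integer matrix preserving `Q`
with determinant `1` and trace `λ + λ⁻¹` for some real `λ > 1`). -/
theorem pell_fermat_isometry (a b c : ℤ)
    (hnondeg : b ^ 2 - 4 * a * c ≠ 0)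
    (hindef : 0 < b ^ 2 - 4 * a * c)
    (hnorep : ∀ u v : ℤ, a * u ^ 2 + b * u * v + c * v ^ 2 = 0 → u = 0 ∧ v = 0) :
    ∃ M : Matrix (Fin 2) (Fin 2) ℤ,
      (∀ u v : ℤ,
        a * (M 0 0 * u + M 0 1 * v) ^ 2 + b * (M 0 0 * u + M 0 1 * v) *
            (M 1 0 * u + M 1 1 * v) + c * (M 1 0 * u + M 1 1 * v) ^ 2 =
          a * u ^ 2 + b * u * v + c * v ^ 2) ∧
      ∃ lam : ℝ, 1 < lam ∧ M.det = 1 ∧ (M.trace : ℝ) = lam + lam⁻¹ := by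
  set d : ℤ := b ^ 2 - 4 * a * c with hd
  have ha : a ≠ 0 := by
    intro h
    have := (hnorep 1 0 (by simp [h])).1
    simp at this
  have hns : ¬ IsSquare d := by
    rintro ⟨k, hk⟩
    have h0 : a * (b + k) ^ 2 + b * (b + k) * (-(2 * a)) + c * (-(2 * a)) ^ 2 = 0 := by
      have : k * k = b ^ 2 - 4 * a * c := by rw [← hk]
      linear_combination (-a) * hk
    have := (hnorep (b + k) (-(2 * a)) h0).2
    omega
  obtain ⟨x, y, hxy, hy⟩ := Pell.exists_of_not_isSquare hindef hns
  -- replace x by |x|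
  set x' : ℤ := |x| with hx'
  have hxy' : x' ^ 2 - d * y ^ 2 = 1 := by rw [hx', sq_abs]; exact hxy
  refine ⟨!![x' - b * y, -(2 * c * y); 2 * a * y, x' + b * y], ?_, ?_⟩
  · intro u v
    simp only [Matrix.of_apply, Matrix.cons_val', Matrix.cons_val_zero, Matrix.cons_val_one,
      Matrix.head_cons, Matrix.empty_val', Matrix.cons_val_fin_one, Matrix.head_fin_const]
    linear_combination (a * u ^ 2 + b * u * v + c * v ^ 2) * hxy'
  · have hy2 : (0:ℤ) < y ^ 2 := by positivity
    have hx1 : 1 < x' := by nlinarith [abs_nonneg x, mul_pos hindef hy2]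
    have hdR : (0:ℝ) < (d:ℝ) := by exact_mod_cast hindef
    set s : ℝ := Real.sqrt d with hs
    have hs2 : s ^ 2 = (d:ℝ) := Real.sq_sqrt hdR.le
    have hspos : 0 < s := Real.sqrt_pos.mpr hdR
    refine ⟨(x':ℝ) + |(y:ℝ)| * s, ?_, ?_, ?_⟩
    · have : (1:ℝ) < (x':ℝ) := by exact_mod_cast hx1
      have hyy : 0 < |(y:ℝ)| := abs_pos.mpr (by exact_mod_cast hy)
      nlinarith
    · simp [Matrix.det_fin_two_of]
      linear_combination hxy'
    · have hprod : ((x':ℝ) + |(y:ℝ)| * s) * ((x':ℝ) - |(y:ℝ)| * s) = 1 := by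
        have h1 : ((x':ℝ)) ^ 2 - (d:ℝ) * (y:ℝ) ^ 2 = 1 := by exact_mod_cast hxy'
        have h2 : |(y:ℝ)| ^ 2 = (y:ℝ) ^ 2 := sq_abs _
        nlinarith
      have hne : ((x':ℝ) + |(y:ℝ)| * s) ≠ 0 := by
        intro h; rw [h, zero_mul] at hprod; norm_num at hprod
      have hinv : ((x':ℝ) + |(y:ℝ)| * s)⁻¹ = (x':ℝ) - |(y:ℝ)| * s := by
        field_simp
        linarith [hprod]
      rw [hinv]
      have : (!![x' - b * y, -(2 * c * y); 2 * a * y, x' + b * y]).trace = 2 * x' := by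
        simp [Matrix.trace_fin_two_of]; ring
      rw [this]
      push_cast
      ring
end
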